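/- arXiv:1912.00043 — 5 statements merged into one kernel-verified Lean document; each statement's English description precedes it below -/
import Mathlib

section
/- Let k be a field and let C_* be a chain complex of finite-dimensional k-vector spaces C_0, C_1, ..., C_n with differentials ∂_j : C_j → C_{j-1} satisfying ∂_j ∘ ∂_{j+1} = 0, equipped with an ℝ-filtration by subcomplexes F_{s_1}C_* ⊆ F_{s_2}C_* ⊆ ... ⊆ F_{s_max}C_* = C_* indexed by real numbers s_1 < s_2 < ... < s_max. Then there exists a filtration-compatible basis of C_* that is in canonical form: each subspace F_s C_j is the span of a subset of the chosen basis of C_j, for every basis vector e of C_j either ∂_j e = 0 or ∂_j e is itself a basis vector of C_{j-1}, and distinct basis vectors with nonzero differential have distinct images. Equivalently, C_* decomposes, via a linear isomorphism preserving the filtration, into a direct sum of filtered complexes of two types: one-dimensional complexes with trivial differential ∂(e_i) = 0, and two-dimensional complexes with trivial homology, ∂(e_{i_2}) = e_{i_1}. -/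
/-!
Induct on the total dimension. If `D` vanishes, a basis adapted to the filtration in each
degree is canonical. Otherwise let `F a` be the lowest filtration level containing a non-cycle
`x` in some degree `j`. Extend `D x` to a basis of `C (j - 1)` adapted to the filtration and let
`W` be the span of the other basis vectors. Then `C` is the filtered direct sum of the
two-dimensional complex spanned by `x, D x` and the subcomplex `C'` which agrees with `C` except
that `C' (j - 1) = W` and `C' j = D⁻¹ W`. In degree `j` the splitting is compatible with the
filtration by the choice of `a`: if `z ∈ F i j` and `D z` has a nonzero `D x`-component, then `z`
is a non-cycle, so `a ≤ i` and `x ∈ F i j`. A canonical basis of `C'` together with `x, D x` is a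
canonical basis of `C`.
-/

open Submodule Set

section LinearAlgebra

variable {k V V' ι : Type*} [DivisionRing k] [AddCommGroup V] [Module k V] [AddCommGroup V']
  [Module k V']

theorem span_inter_eq_inf_of_subsingleton {s : Set V} (hs : s.Subsingleton) (P : Submodule k V) :
    span k (s ∩ P) = span k s ⊓ P := by
  rcases hs.eq_empty_or_singleton with rfl | ⟨x, rfl⟩
  · simp
  by_cases hx : x ∈ P
  · rw [inter_eq_left.2 (singleton_subset_iff.2 hx),
      inf_eq_left.2 ((span_singleton_le_iff_mem _ _).2 hx)]
  · rw [singleton_inter_eq_empty.2 hx, span_empty, eq_comm, ← disjoint_iff, disjoint_comm,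
      disjoint_span_singleton]
    exact fun h => absurd h hx

theorem linearIndepOn_id_union_of_inf_span_le {u c : Set V} (hu : LinearIndepOn k id u)
    (hc : LinearIndepOn k id c) (huc : u ∩ span k c ⊆ c)
    (hcompat : span k u ⊓ span k c ≤ span k (u ∩ span k c)) :
    LinearIndepOn k id (u ∪ c) := by
  have hunion : u ∪ c = (u \ span k c) ∪ c := by
    conv_lhs => rw [← sdiff_union_inter u (span k c : Set V), union_assoc, union_eq_right.2 huc]
  have hdisj := ((linearIndepOn_union_iff (disjoint_sdiff_inter (s := u) (t := span k c))).1
    (by rwa [sdiff_union_inter])).2.2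
  rw [image_id, image_id] at hdisj
  rw [hunion]
  refine (hu.mono sdiff_subset).id_union hc (disjoint_def.2 fun z hz hzc => ?_)
  exact disjoint_def.1 hdisj z hz (hcompat ⟨span_mono sdiff_subset hz, hzc⟩)

theorem exists_linearIndepOn_extension_span_inter_eq [LinearOrder ι] [Finite ι] [OrderTop ι]
    {G : ι → Submodule k V} (hG : Monotone G) {u : Set V} (hu : LinearIndepOn k id u)
    (huG : u ⊆ G ⊤) (hcompat : ∀ i, span k u ⊓ G i ≤ span k (u ∩ G i)) :
    ∃ c, u ⊆ c ∧ c ⊆ G ⊤ ∧ LinearIndepOn k id c ∧ ∀ i, span k (c ∩ G i) = G i := by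
  cases nonempty_fintype ι
  have key (s : Finset ι) : ∃ c, LinearIndepOn k id (u ∪ c) ∧
      (∀ a ∈ upperBounds (s : Set ι), c ⊆ G a) ∧
      ∀ i ∈ s, u ∩ G i ⊆ c ∧ span k (c ∩ G i) = G i := by
    induction s using Finset.induction_on_max with
    | empty => exact ⟨∅, by simpa using hu, by simp, by simp⟩
    | insert a s hsa ih =>
      obtain ⟨c, hindep, hcG, hc⟩ := ih
      have hca : c ⊆ G a := hcG a fun i hi => (hsa i hi).le
      obtain ⟨c', hc'G, hcc', hGc', hc'⟩ := exists_linearIndepOn_id_extension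
        (hindep.mono (union_subset subset_union_right (inter_subset_left.trans subset_union_left)))
        (union_subset hca inter_subset_right)
      have hspan : span k c' = G a := le_antisymm (span_le.2 hc'G) (fun x hx => hGc' hx)
      refine ⟨c', ?_, fun b hb => hc'G.trans (hG (hb (Finset.mem_insert_self a s))), ?_⟩
      · refine linearIndepOn_id_union_of_inf_span_le hu hc' ?_ ?_ <;> rw [hspan]
        · exact subset_union_right.trans hcc'
        · exact hcompat a
      intro i hi
      rcases Finset.mem_insert.1 hi with rfl | hi
      · rw [inter_eq_left.2 hc'G]
        exact ⟨subset_union_right.trans hcc', hspan⟩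
      · have hcc' : c ⊆ c' := subset_union_left.trans hcc'
        exact ⟨(hc i hi).1.trans hcc', le_antisymm (span_le.2 inter_subset_right)
          ((hc i hi).2.ge.trans (span_mono (inter_subset_inter_left _ hcc')))⟩
  obtain ⟨c, hindep, hcG, hc⟩ := key Finset.univ
  exact ⟨c, fun x hx => (hc ⊤ (Finset.mem_univ _)).1 ⟨hx, huG hx⟩, hcG ⊤ fun i _ => le_top,
    hindep.mono subset_union_right, fun i => (hc i (Finset.mem_univ _)).2⟩

structure IsFilteredCompl (G : ι → Submodule k V) (R P Q : Submodule k V) : Prop where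
  disjoint : Disjoint P Q
  sup_eq : P ⊔ Q = R
  inf_le_sup : ∀ i, G i ⊓ R ≤ G i ⊓ P ⊔ G i ⊓ Q

theorem IsFilteredCompl.bot_left (G : ι → Submodule k V) (R : Submodule k V) :
    IsFilteredCompl G R ⊥ R :=
  ⟨disjoint_bot_left, bot_sup_eq R, fun _ => le_sup_right⟩

theorem exists_isFilteredCompl_span_singleton [LinearOrder ι] [Finite ι] [OrderTop ι]
    {G : ι → Submodule k V} (hG : Monotone G) {R : Submodule k V} (hR : R ≤ G ⊤) {w : V}
    (hwR : w ∈ R) (hw : w ≠ 0) : ∃ Q, IsFilteredCompl G R (k ∙ w) Q := by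
  obtain ⟨c, hwc, hcR, hc, hcG⟩ := exists_linearIndepOn_extension_span_inter_eq
    (G := fun i => G i ⊓ R) (fun i i' h => inf_le_inf_right R (hG h))
    ((linearIndepOn_singleton_iff k).2 hw) (singleton_subset_iff.2 ⟨hR hwR, hwR⟩)
    (fun i => (span_inter_eq_inf_of_subsingleton subsingleton_singleton _).ge)
  have hwc : w ∈ c := singleton_subset_iff.1 hwc
  have hcw : c = insert w (c \ {w}) := (insert_sdiff_self_of_mem hwc).symm
  have hspan : span k c = R := by
    rw [← inter_eq_left.2 hcR, hcG ⊤, inf_eq_right.2 hR]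
  refine ⟨span k (c \ {w}), ⟨?_, ?_, fun i => ?_⟩⟩
  · rw [disjoint_comm, disjoint_span_singleton' hw]
    rw [hcw] at hc
    exact ((linearIndepOn_id_insert (fun h => h.2 rfl)).1 hc).2
  · rw [← span_insert, ← hcw, hspan]
  · rw [← hcG i]
    refine span_le.2 fun y ⟨hyc, hyG⟩ => ?_
    by_cases hyw : y = w
    · exact mem_sup_left ⟨hyG.1, hyw ▸ mem_span_singleton_self y⟩
    · exact mem_sup_right ⟨hyG.1, subset_span ⟨hyc, hyw⟩⟩

theorem IsFilteredCompl.comap {G : ι → Submodule k V} {H : ι → Submodule k V'}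
    {f : V →ₗ[k] V'} (hf : ∀ i, G i ≤ (H i).comap f) {R : Submodule k V} {R' : Submodule k V'}
    (hfR : R ≤ R'.comap f) {x : V} {Q : Submodule k V'} (h : IsFilteredCompl H R' (k ∙ f x) Q)
    (hxR : x ∈ R) (hfx : f x ≠ 0) (hx : ∀ i, ∀ z ∈ G i ⊓ R, f z ≠ 0 → x ∈ G i) :
    IsFilteredCompl G R (k ∙ x) (R ⊓ Q.comap f) := by
  have hfxQ : f x ∉ Q := (disjoint_span_singleton' hfx).1 h.disjoint.symm
  have hsub {z : V} (hz : z ∈ R) {γ : k} {q : V'} (hq : q ∈ Q) (hzq : γ • f x + q = f z) :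
      z - γ • x ∈ R ⊓ Q.comap f :=
    ⟨sub_mem hz (smul_mem _ γ hxR), by simpa [← hzq] using hq⟩
  refine ⟨?_, le_antisymm (sup_le ((span_singleton_le_iff_mem _ _).2 hxR) inf_le_left)
    fun z hz => ?_, fun i z ⟨hzG, hzR⟩ => ?_⟩
  · rw [disjoint_comm, disjoint_span_singleton' (fun h => hfx (by simp [h]))]
    exact fun hx' => hfxQ hx'.2
  · obtain ⟨_, hp, q, hq, hzq⟩ := mem_sup.1 (h.sup_eq ▸ hfR hz)
    obtain ⟨γ, rfl⟩ := mem_span_singleton.1 hp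
    rw [← add_sub_cancel (γ • x) z]
    exact add_mem (mem_sup_left (smul_mem _ γ (mem_span_singleton_self x)))
      (mem_sup_right (hsub hz hq hzq))
  · obtain ⟨_, ⟨-, hp⟩, q, ⟨-, hq⟩, hzq⟩ := mem_sup.1 (h.inf_le_sup i ⟨hf i hzG, hfR hzR⟩)
    obtain ⟨γ, rfl⟩ := mem_span_singleton.1 hp
    have hγx : γ • x ∈ G i := by
      rcases eq_or_ne γ 0 with rfl | hγ
      · simp
      refine smul_mem _ γ (hx i z ⟨hzG, hzR⟩ fun hfz => hfxQ ?_)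
      rw [hfz, add_eq_zero_iff_eq_neg] at hzq
      have hγfx : γ • f x ∈ Q := hzq ▸ Q.neg_mem hq
      rwa [← Q.smul_mem_iff hγ]
    rw [← add_sub_cancel (γ • x) z]
    exact add_mem (mem_sup_left ⟨hγx, smul_mem _ γ (mem_span_singleton_self x)⟩)
      (mem_sup_right ⟨sub_mem hzG hγx, hsub hzR hq hzq⟩)

theorem Monotone.exists_mem_of_inter_nonempty {α : Type*} [LinearOrder ι] [WellFoundedLT ι]
    {G : ι → Set α} (hG : Monotone G) {P : Set α} (h : ∃ i, (G i ∩ P).Nonempty) :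
    ∃ x ∈ P, ∀ i, (G i ∩ P).Nonempty → x ∈ G i := by
  obtain ⟨a, ⟨x, hxa, hxP⟩, hmin⟩ := wellFounded_lt.has_min {i | (G i ∩ P).Nonempty} h
  exact ⟨x, hxP, fun i hi => hG (not_lt.1 (hmin i hi)) hxa⟩

theorem exists_basis_fin_finrank_range_eq [FiniteDimensional k V] {s : Set V}
    (hs : LinearIndepOn k id s) (hspan : span k s = ⊤) :
    ∃ B : Module.Basis (Fin (Module.finrank k V)) k V, range B = s := by
  let B₀ := Module.Basis.mk (v := ((↑) : s → V)) hs (by rw [Subtype.range_coe, hspan])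
  refine ⟨B₀.reindex (B₀.indexEquiv (Module.finBasis k V)), ?_⟩
  rw [Module.Basis.range_reindex]
  exact (congrArg range (Module.Basis.coe_mk (v := ((↑) : s → V)) _ _)).trans Subtype.range_coe

end LinearAlgebra

section ChainComplex

variable {k ι : Type*} [DivisionRing k] {C : ℤ → Type*} [∀ j, AddCommGroup (C j)]
  [∀ j, Module k (C j)] (D : ∀ j, C j →ₗ[k] C (j - 1))

def IsSubcomplex (U : ∀ j, Submodule k (C j)) : Prop :=
  ∀ j, ∀ x ∈ U j, D j x ∈ U (j - 1)

structure IsCanonicalBasis (F : ι → ∀ j, Submodule k (C j)) (U : ∀ j, Submodule k (C j))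
    (b : ∀ j, Set (C j)) : Prop where
  linearIndepOn : ∀ j, LinearIndepOn k id (b j)
  span_eq : ∀ j, span k (b j) = U j
  span_inter_eq : ∀ i j, span k (b j ∩ F i j) = F i j ⊓ U j
  map_eq_zero_or_mem : ∀ j, ∀ y ∈ b j, D j y = 0 ∨ D j y ∈ b (j - 1)
  injOn : ∀ j, InjOn (D j) {y ∈ b j | D j y ≠ 0}

variable {D} {F : ι → ∀ j, Submodule k (C j)}

theorem IsCanonicalBasis.map_mem {U : ∀ j, Submodule k (C j)} {b : ∀ j, Set (C j)}
    (h : IsCanonicalBasis D F U b) {j : ℤ} {y : C j} (hy : y ∈ b j) : D j y ∈ U (j - 1) := by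
  rw [← h.span_eq]
  rcases h.map_eq_zero_or_mem j y hy with h0 | hmem
  · exact h0 ▸ zero_mem _
  · exact subset_span hmem

theorem IsCanonicalBasis.union {U U₁ U₂ : ∀ j, Submodule k (C j)} {b₁ b₂ : ∀ j, Set (C j)}
    (h₁ : IsCanonicalBasis D F U₁ b₁) (h₂ : IsCanonicalBasis D F U₂ b₂)
    (hU : ∀ j, IsFilteredCompl (F · j) (U j) (U₁ j) (U₂ j)) :
    IsCanonicalBasis D F U fun j => b₁ j ∪ b₂ j where
  linearIndepOn j := (h₁.linearIndepOn j).id_union (h₂.linearIndepOn j)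
    (by rw [h₁.span_eq, h₂.span_eq]; exact (hU j).disjoint)
  span_eq j := by rw [span_union, h₁.span_eq, h₂.span_eq, (hU j).sup_eq]
  span_inter_eq i j := by
    rw [union_inter_distrib_right, span_union, h₁.span_inter_eq, h₂.span_inter_eq,
      ← (hU j).sup_eq]
    exact le_antisymm (sup_le (inf_le_inf_left _ le_sup_left) (inf_le_inf_left _ le_sup_right))
      ((hU j).sup_eq ▸ (hU j).inf_le_sup i)
  map_eq_zero_or_mem j y := by
    rintro (hy | hy)
    · exact (h₁.map_eq_zero_or_mem j y hy).imp_right Or.inl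
    · exact (h₂.map_eq_zero_or_mem j y hy).imp_right Or.inr
  injOn j := by
    have hcross {y y'} (hy : y ∈ b₁ j) (hy' : y' ∈ b₂ j) (hyy' : D j y = D j y') :
        D j y = 0 :=
      disjoint_def.1 (hU (j - 1)).disjoint _ (h₁.map_mem hy) (hyy' ▸ h₂.map_mem hy')
    rintro y ⟨hy | hy, hy0⟩ y' ⟨hy' | hy', -⟩ hyy'
    · exact h₁.injOn j ⟨hy, hy0⟩ ⟨hy', hyy' ▸ hy0⟩ hyy'
    · exact absurd (hcross hy hy' hyy') hy0
    · exact absurd (hcross hy' hy hyy'.symm) (hyy' ▸ hy0)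
    · exact h₂.injOn j ⟨hy, hy0⟩ ⟨hy', hyy' ▸ hy0⟩ hyy'

variable (D) in
def pairBasis {j : ℤ} (x : C j) : ∀ l, Set (C l) :=
  Function.update (Function.update (fun _ => ∅) j {x}) (j - 1) {D j x}

section pairBasis

variable {j : ℤ} {x : C j}

theorem pairBasis_sub_one : pairBasis D x (j - 1) = {D j x} :=
  Function.update_self ..

theorem pairBasis_self : pairBasis D x j = {x} := by
  rw [pairBasis, Function.update_of_ne (by omega), Function.update_self]

theorem pairBasis_of_ne {l : ℤ} (hj : l ≠ j) (hj₁ : l ≠ j - 1) : pairBasis D x l = ∅ := by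
  rw [pairBasis, Function.update_of_ne hj₁, Function.update_of_ne hj]

theorem pairBasis_subsingleton (l : ℤ) : (pairBasis D x l).Subsingleton := by
  rcases eq_or_ne l (j - 1) with rfl | hj₁
  · simp [pairBasis_sub_one]
  rcases eq_or_ne l j with rfl | hj
  · simp [pairBasis_self]
  · simp [pairBasis_of_ne hj hj₁]

theorem linearIndepOn_pairBasis (hx : D j x ≠ 0) (l : ℤ) :
    LinearIndepOn k id (pairBasis D x l) := by
  rcases eq_or_ne l (j - 1) with rfl | hj₁
  · simpa [pairBasis_sub_one, linearIndepOn_singleton_iff] using hx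
  rcases eq_or_ne l j with rfl | hj
  · simpa [pairBasis_self, linearIndepOn_singleton_iff] using fun h : x = 0 => hx (h ▸ map_zero _)
  · simp [pairBasis_of_ne hj hj₁]

theorem isCanonicalBasis_pairBasis (hDD : ∀ j (x : C j), D (j - 1) (D j x) = 0)
    (hx : D j x ≠ 0) :
    IsCanonicalBasis D F (fun l => span k (pairBasis D x l)) (pairBasis D x) where
  linearIndepOn := linearIndepOn_pairBasis hx
  span_eq _ := rfl
  span_inter_eq i l := by
    rw [span_inter_eq_inf_of_subsingleton (pairBasis_subsingleton l), inf_comm]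
  map_eq_zero_or_mem l y hy := by
    rcases eq_or_ne l (j - 1) with rfl | hj₁
    · rw [pairBasis_sub_one, mem_singleton_iff] at hy
      exact .inl (hy ▸ hDD j x)
    rcases eq_or_ne l j with rfl | hj
    · rw [pairBasis_self, mem_singleton_iff] at hy
      exact .inr (by simp [hy, pairBasis_sub_one])
    · simp [pairBasis_of_ne hj hj₁] at hy
  injOn l := ((pairBasis_subsingleton l).anti (sep_subset _ _)).injOn _

end pairBasis

variable [LinearOrder ι] [Finite ι] [OrderTop ι]

theorem exists_isCanonicalBasis_of_forall_map_eq_zero (hF_mono : Monotone F)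
    (hF_top : ∀ j, F ⊤ j = ⊤) {U : ∀ j, Submodule k (C j)} (hU : ∀ j, ∀ y ∈ U j, D j y = 0) :
    ∃ b, IsCanonicalBasis D F U b := by
  have (j : ℤ) : ∃ c ⊆ (U j : Set (C j)), LinearIndepOn k id c ∧
      ∀ i, span k (c ∩ F i j) = F i j ⊓ U j := by
    obtain ⟨c, -, hcU, hc, hcF⟩ := exists_linearIndepOn_extension_span_inter_eq
      (G := fun i => F i j ⊓ U j) (fun i i' h => inf_le_inf_right _ (hF_mono h j))
      (linearIndepOn_empty k id) (empty_subset _) (by simp)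
    replace hcU : c ⊆ U j := by simpa [hF_top] using hcU
    refine ⟨c, hcU, hc, fun i => ?_⟩
    rw [← hcF i, coe_inf, inter_comm (F i j : Set (C j)), ← inter_assoc, inter_eq_left.2 hcU]
  choose b hbU hb hbF using this
  exact ⟨b, {
    linearIndepOn := hb
    span_eq j := by simpa [hF_top] using hbF j ⊤
    span_inter_eq i j := hbF j i
    map_eq_zero_or_mem j y hy := .inl (hU j y (hbU j hy))
    injOn j y hy := absurd (hU j y (hbU j hy.1)) hy.2 }⟩

theorem exists_isCanonicalBasis_of_map_ne_zero (hDD : ∀ j (x : C j), D (j - 1) (D j x) = 0)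
    (hF_mono : Monotone F) (hF_sub : ∀ i, IsSubcomplex D (F i)) (hF_top : ∀ j, F ⊤ j = ⊤)
    {U : ∀ j, Submodule k (C j)} (hU : IsSubcomplex D U) {j : ℤ} {y : C j} (hyU : y ∈ U j)
    (hy : D j y ≠ 0)
    (ih : ∀ U' : ∀ j, Submodule k (C j), IsSubcomplex D U' → (∀ l, U' l ≤ U l) →
      (∃ l, U' l < U l) → ∃ b, IsCanonicalBasis D F U' b) :
    ∃ b, IsCanonicalBasis D F U b := by
  obtain ⟨x, ⟨hxU, hx⟩, hxF⟩ := Monotone.exists_mem_of_inter_nonempty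
    (G := fun i => (F i j : Set (C j))) (fun i i' h => hF_mono h j)
    (P := {z | z ∈ U j ∧ D j z ≠ 0}) ⟨⊤, y, by simp [hF_top], hyU, hy⟩
  obtain ⟨W, hW⟩ := exists_isFilteredCompl_span_singleton (G := (F · (j - 1)))
    (fun i i' h => hF_mono h (j - 1)) (R := U (j - 1)) (by simp [hF_top]) (hU j x hxU) hx
  -- the largest subcomplex of `U` that lies in `W` in degree `j - 1`
  let K : ∀ l, Submodule k (C l) := Function.update ⊤ (j - 1) W
  let U' : ∀ l, Submodule k (C l) := fun l => U l ⊓ K l ⊓ (K (l - 1)).comap (D l)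
  have hU' : IsSubcomplex D U' := fun l z hz => ⟨⟨hU l z hz.1.1, hz.2⟩, by simp [hDD]⟩
  have hWU : W ≤ U (j - 1) := hW.sup_eq ▸ le_sup_right
  have hsplit (l : ℤ) : IsFilteredCompl (F · l) (U l) (span k (pairBasis D x l)) (U' l) := by
    rcases eq_or_ne l (j - 1) with rfl | hj₁
    · have : U' (j - 1) = W := by simpa [U', K] using hWU
      rwa [pairBasis_sub_one, this]
    rcases eq_or_ne l j with rfl | hj
    · have : U' l = U l ⊓ W.comap (D l) := by simp [U', K, Function.update_of_ne hj₁]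
      rw [pairBasis_self, this]
      exact hW.comap (fun i => hF_sub i l) (hU l) hxU hx
        fun i z hz hz0 => hxF i ⟨z, hz.1, hz.2, hz0⟩
    · have : U' l = U l := by simp [U', K, hj₁, show l - 1 ≠ j - 1 by omega]
      rw [pairBasis_of_ne hj hj₁, span_empty, this]
      exact .bot_left _ _
  have hxU' : x ∉ U' j := fun hxU' => (fun h : x = 0 => hx (h ▸ map_zero _))
    (disjoint_def.1 (hsplit j).disjoint x (by simp [pairBasis_self, mem_span_singleton_self]) hxU')
  obtain ⟨b, hb⟩ := ih U' hU' (fun l => (hsplit l).sup_eq ▸ le_sup_right)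
    ⟨j, lt_of_le_of_ne ((hsplit j).sup_eq ▸ le_sup_right) fun h => hxU' (h ▸ hxU)⟩
  exact ⟨_, (isCanonicalBasis_pairBasis hDD hx).union hb hsplit⟩

theorem exists_isCanonicalBasis [∀ j, FiniteDimensional k (C j)]
    (hDD : ∀ j (x : C j), D (j - 1) (D j x) = 0) (hF_mono : Monotone F)
    (hF_sub : ∀ i, IsSubcomplex D (F i)) (hF_top : ∀ j, F ⊤ j = ⊤) (S : Finset ℤ)
    {U : ∀ j, Submodule k (C j)} (hU : IsSubcomplex D U) (hS : ∀ j ∉ S, U j = ⊥) :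
    ∃ b, IsCanonicalBasis D F U b := by
  induction hN : ∑ j ∈ S, Module.finrank k (U j) using Nat.strong_induction_on
    generalizing U with
  | _ N ih =>
  by_cases hcyc : ∀ j, ∀ y ∈ U j, D j y = 0
  · exact exists_isCanonicalBasis_of_forall_map_eq_zero hF_mono hF_top hcyc
  push Not at hcyc
  obtain ⟨j, y, hyU, hy⟩ := hcyc
  refine exists_isCanonicalBasis_of_map_ne_zero hDD hF_mono hF_sub hF_top hU hyU hy
    fun U' hU' hle ⟨l, hlt⟩ => ih _ (hN ▸ ?_) hU' (fun j hj => eq_bot_iff.2 (hS j hj ▸ hle j)) rfl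
  refine Finset.sum_lt_sum (fun j _ => Submodule.finrank_mono (hle j))
    ⟨l, ?_, Submodule.finrank_lt_finrank_of_lt hlt⟩
  by_contra hl
  exact not_lt_bot (hS l hl ▸ hlt)

end ChainComplex

theorem canonical_form_exists_general
    (k : Type*) [Field k]
    (C : ℤ → Type*) [∀ j, AddCommGroup (C j)] [∀ j, Module k (C j)]
    [∀ j, FiniteDimensional k (C j)]
    (n : ℕ) (hbound : ∀ j : ℤ, (j < 0 ∨ (n : ℤ) < j) → ∀ x : C j, x = 0)
    (D : ∀ j : ℤ, C j →ₗ[k] C (j - 1))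
    (hDD : ∀ (j : ℤ) (x : C j), D (j - 1) (D j x) = 0)
    (m : ℕ)
    (F : Fin (m + 1) → ∀ j : ℤ, Submodule k (C j))
    (hFmono : ∀ i i' : Fin (m + 1), i ≤ i' → ∀ j : ℤ, F i j ≤ F i' j)
    (hFtop : ∀ j : ℤ, F (Fin.last m) j = ⊤)
    (hFsub : ∀ (i : Fin (m + 1)) (j : ℤ), ∀ x ∈ F i j, D j x ∈ F i (j - 1)) :
    ∃ B : ∀ j : ℤ, Module.Basis (Fin (Module.finrank k (C j))) k (C j),
      (∀ (i : Fin (m + 1)) (j : ℤ), ∃ I : Set (Fin (Module.finrank k (C j))),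
          F i j = Submodule.span k (⇑(B j) '' I)) ∧
      (∀ (j : ℤ) (e : Fin (Module.finrank k (C j))),
          D j (B j e) = 0 ∨
            ∃ e' : Fin (Module.finrank k (C (j - 1))), D j (B j e) = B (j - 1) e') ∧
      (∀ (j : ℤ) (e e' : Fin (Module.finrank k (C j))),
          D j (B j e) ≠ 0 → D j (B j e') ≠ 0 →
            D j (B j e) = D j (B j e') → e = e') := by
  obtain ⟨b, hb⟩ := exists_isCanonicalBasis hDD hFmono hFsub
    (by simpa [Fin.top_eq_last] using hFtop) (Finset.Icc 0 n) (U := fun _ => ⊤)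
    (fun _ _ _ => mem_top) fun j hj => eq_bot_iff.2 fun x _ => (mem_bot k).2 <| hbound j
      (by simpa only [Finset.mem_Icc, not_and_or, not_le] using hj) x
  choose B hB using fun j => exists_basis_fin_finrank_range_eq (hb.linearIndepOn j) (hb.span_eq j)
  have hBb (j : ℤ) (e : Fin (Module.finrank k (C j))) : B j e ∈ b j := hB j ▸ mem_range_self e
  refine ⟨B, fun i j => ⟨B j ⁻¹' F i j, ?_⟩, fun j e => ?_, fun j e e' he he' hee' => ?_⟩
  · rw [image_preimage_eq_range_inter, hB, hb.span_inter_eq, inf_top_eq]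
  · refine (hb.map_eq_zero_or_mem j _ (hBb j e)).imp_right fun h => ?_
    obtain ⟨e', he'⟩ := hB (j - 1) ▸ h
    exact ⟨e', he'.symm⟩
  · exact (B j).injective (hb.injOn j ⟨hBb j e, he⟩ ⟨hBb j e', he'⟩ hee')

/-- **Existence of the canonical form (barcode basis) of an ℝ-filtered chain complex.**
Let `C` be a chain complex of finite-dimensional vector spaces over a field `k`,
concentrated in degrees `0, 1, …, n`, with differentials `D j : C j → C (j-1)`
satisfying `D ∘ D = 0`, equipped with an increasing ℝ-filtration by subcomplexes
`F (s 0) C ⊆ … ⊆ F (s m) C = C` indexed by reals `s 0 < s 1 < … < s m`.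
Then there exists a filtration-compatible basis of `C` in canonical form: each
filtration subspace is the span of a subset of the basis, the differential of each
basis vector is either zero or again a basis vector, and distinct basis vectors with
nonzero differential have distinct images.  (Equivalently, `C` splits, by a linear
change of basis preserving the filtration, into one-dimensional filtered complexes
with trivial differential and two-dimensional filtered complexes with trivial
homology.) -/
theorem canonical_form_exists
    (k : Type*) [Field k]
    (C : ℤ → Type*) [∀ j, AddCommGroup (C j)] [∀ j, Module k (C j)]
    [∀ j, FiniteDimensional k (C j)]
    (n : ℕ) (hbound : ∀ j : ℤ, (j < 0 ∨ (n : ℤ) < j) → ∀ x : C j, x = 0)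
    (D : ∀ j : ℤ, C j →ₗ[k] C (j - 1))
    (hDD : ∀ (j : ℤ) (x : C j), D (j - 1) (D j x) = 0)
    (m : ℕ) (s : Fin (m + 1) → ℝ) (hs : StrictMono s)
    (F : Fin (m + 1) → ∀ j : ℤ, Submodule k (C j))
    (hFmono : ∀ i i' : Fin (m + 1), i ≤ i' → ∀ j : ℤ, F i j ≤ F i' j)
    (hFtop : ∀ j : ℤ, F (Fin.last m) j = ⊤)
    (hFsub : ∀ (i : Fin (m + 1)) (j : ℤ), ∀ x ∈ F i j, D j x ∈ F i (j - 1)) :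
    ∃ B : ∀ j : ℤ, Module.Basis (Fin (Module.finrank k (C j))) k (C j),
      (∀ (i : Fin (m + 1)) (j : ℤ), ∃ I : Set (Fin (Module.finrank k (C j))),
          F i j = Submodule.span k (⇑(B j) '' I)) ∧
      (∀ (j : ℤ) (e : Fin (Module.finrank k (C j))),
          D j (B j e) = 0 ∨
            ∃ e' : Fin (Module.finrank k (C (j - 1))), D j (B j e) = B (j - 1) e') ∧
      (∀ (j : ℤ) (e e' : Fin (Module.finrank k (C j))),
          D j (B j e) ≠ 0 → D j (B j e') ≠ 0 →
            D j (B j e) = D j (B j e') → e = e') :=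
  canonical_form_exists_general k C n hbound D hDD m F hFmono hFtop hFsub
end

section
/- Let k be a field and let C_* be a chain complex of finite-dimensional k-vector spaces with an ℝ-filtration by subcomplexes F_{s_1}C_* ⊆ ... ⊆ F_{s_max}C_* = C_*, and suppose a filtration-compatible basis in canonical form is given. Call a degree-j basis vector e' 'paired' if e' = ∂e for some degree-(j+1) basis vector e (its partner), and 'unpaired' if ∂e' = 0 and e' is not the image under ∂ of any basis vector. Then for every filtration index s and every degree j, the dimension of the degree-j homology H_j(F_s C_*) = ker(∂_j|_{F_s C_j}) / im(∂_{j+1}|_{F_s C_{j+1}}) equals the number of unpaired degree-j basis vectors e' with level(e') ≤ s plus the number of paired degree-j basis vectors e' whose partner e satisfies level(e') ≤ s < level(e). In other words, the homology dimension at filtration level s equals the number of degree-j bars [level(e'), level(e)) or [level(e'), ∞) of the canonical form that contain s. -/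
open scoped Classical

/-- The filtration level of a vector `v` in degree `j`: the smallest real filtration
index `s i` such that `v ∈ F i j` (the infimum of the corresponding set of reals). -/
noncomputable def filtLevel {k : Type*} [Field k] {C : ℤ → Type*}
    [∀ j, AddCommGroup (C j)] [∀ j, Module k (C j)] {m : ℕ}
    (s : Fin (m + 1) → ℝ) (F : Fin (m + 1) → ∀ j : ℤ, Submodule k (C j))
    (j : ℤ) (v : C j) : ℝ :=
  sInf (s '' {i : Fin (m + 1) | v ∈ F i j})

lemma filtLevel_le_iff {k : Type*} [Field k] {C : ℤ → Type*}
    [∀ j, AddCommGroup (C j)] [∀ j, Module k (C j)] {m : ℕ}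
    {s : Fin (m + 1) → ℝ} (hs : StrictMono s)
    {F : Fin (m + 1) → ∀ j : ℤ, Submodule k (C j)}
    (hFmono : ∀ i i' : Fin (m + 1), i ≤ i' → ∀ j : ℤ, F i j ≤ F i' j)
    (hFtop : ∀ j : ℤ, F (Fin.last m) j = ⊤)
    (j : ℤ) (v : C j) (i : Fin (m + 1)) :
    filtLevel s F j v ≤ s i ↔ v ∈ F i j := by
  set S : Set ℝ := s '' {i' : Fin (m + 1) | v ∈ F i' j} with hS
  have hSne : S.Nonempty := ⟨s (Fin.last m), ⟨Fin.last m, by simp [hFtop j], rfl⟩⟩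
  have hSfin : S.Finite := (Set.toFinite _).image s
  constructor
  · intro h
    obtain ⟨i0, hi0, hEq⟩ := hSne.csInf_mem hSfin
    have : s i0 ≤ s i := by rw [hEq]; exact h
    exact hFmono i0 i (hs.le_iff_le.mp this) j hi0
  · intro h
    exact csInf_le hSfin.bddBelow ⟨i, h, rfl⟩

/-- **The barcode of the canonical form computes the homology of all filtration
pieces.**  Given a filtration-compatible basis in canonical form of an ℝ-filtered chain
complex, call a degree-`(j-1)` basis vector `e'` *paired* if `e' = D e` for a
degree-`j` basis vector `e` (its partner) and *unpaired* if `D e' = 0` and `e'` is not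
the image of any basis vector.  Then for every filtration index `i` and every degree,
the dimension of the homology of the filtration piece `F i` in that degree,
`ker (D (j-1)|_{F i (j-1)}) / im (D j|_{F i j})`, equals the number of unpaired basis
vectors `e'` of that degree with `level e' ≤ s i` plus the number of paired basis
vectors `e'` whose partner `e` satisfies `level e' ≤ s i < level e`; i.e. the number of
bars of the barcode in that degree containing `s i`. -/
theorem homology_dim_eq_bars_count
    (k : Type*) [Field k]
    (C : ℤ → Type*) [∀ j, AddCommGroup (C j)] [∀ j, Module k (C j)]
    [∀ j, FiniteDimensional k (C j)]
    (n : ℕ) (hbound : ∀ j : ℤ, (j < 0 ∨ (n : ℤ) < j) → ∀ x : C j, x = 0)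
    (D : ∀ j : ℤ, C j →ₗ[k] C (j - 1))
    (hDD : ∀ (j : ℤ) (x : C j), D (j - 1) (D j x) = 0)
    (m : ℕ) (s : Fin (m + 1) → ℝ) (hs : StrictMono s)
    (F : Fin (m + 1) → ∀ j : ℤ, Submodule k (C j))
    (hFmono : ∀ i i' : Fin (m + 1), i ≤ i' → ∀ j : ℤ, F i j ≤ F i' j)
    (hFtop : ∀ j : ℤ, F (Fin.last m) j = ⊤)
    (hFsub : ∀ (i : Fin (m + 1)) (j : ℤ), ∀ x ∈ F i j, D j x ∈ F i (j - 1))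
    (ι : ℤ → Type*) [∀ j, Fintype (ι j)]
    (B : ∀ j : ℤ, Module.Basis (ι j) k (C j))
    (hBcompat : ∀ (i : Fin (m + 1)) (j : ℤ), ∃ I : Set (ι j),
        F i j = Submodule.span k (⇑(B j) '' I))
    (hBcan : ∀ (j : ℤ) (e : ι j),
        D j (B j e) = 0 ∨ ∃ e' : ι (j - 1), D j (B j e) = B (j - 1) e')
    (hBinj : ∀ (j : ℤ) (e e' : ι j), D j (B j e) ≠ 0 → D j (B j e') ≠ 0 →
        D j (B j e) = D j (B j e') → e = e') :
    ∀ (i : Fin (m + 1)) (j : ℤ),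
      Module.finrank k
        (↥(F i (j - 1) ⊓ LinearMap.ker (D (j - 1))) ⧸
          Submodule.comap (F i (j - 1) ⊓ LinearMap.ker (D (j - 1))).subtype
            (Submodule.map (D j) (F i j)))
      = (Finset.univ.filter (fun e' : ι (j - 1) =>
            D (j - 1) (B (j - 1) e') = 0 ∧
            ¬ (∃ e : ι j, D j (B j e) = B (j - 1) e') ∧
            filtLevel s F (j - 1) (B (j - 1) e') ≤ s i)).card
        + (Finset.univ.filter (fun e' : ι (j - 1) =>
            ∃ e : ι j, D j (B j e) = B (j - 1) e' ∧
              filtLevel s F (j - 1) (B (j - 1) e') ≤ s i ∧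
              s i < filtLevel s F j (B j e))).card := by
  intro i j
  have hlev : ∀ (jj : ℤ) (v : C jj), (filtLevel s F jj v ≤ s i ↔ v ∈ F i jj) :=
    fun jj v => filtLevel_le_iff hs hFmono hFtop jj v i
  -- convert levels to membership in the goal
  simp only [lt_iff_not_ge, hlev]
  -- span description of filtration pieces
  have hspan : ∀ jj : ℤ, F i jj = Submodule.span k (⇑(B jj) '' {e | B jj e ∈ F i jj}) := by
    intro jj
    obtain ⟨I, hI⟩ := hBcompat i jj
    have hset : {e | B jj e ∈ F i jj} = I := by
      ext e
      simp [hI, Module.Basis.mem_span_image, Module.Basis.repr_self,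
        Finsupp.support_single_ne_zero e (one_ne_zero (α := k)), Set.singleton_subset_iff]
    rw [hset, ← hI]
  -- kernel coefficients
  have hker : ∀ v : C (j - 1), D (j - 1) v = 0 → ∀ e0 : ι (j - 1),
      (B (j - 1)).repr v e0 ≠ 0 → D (j - 1) (B (j - 1) e0) = 0 := by
    intro v hv e0 hc0
    by_contra hne
    obtain ⟨e0', he0'⟩ := (hBcan (j - 1) e0).resolve_left hne
    have h2 : (0 : C (j - 1 - 1)) =
        ∑ e : ι (j - 1), (B (j - 1)).repr v e • D (j - 1) (B (j - 1) e) := by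
      calc (0 : C (j - 1 - 1)) = D (j - 1) v := hv.symm
        _ = D (j - 1) (∑ e : ι (j - 1), (B (j - 1)).repr v e • B (j - 1) e) := by
            rw [Module.Basis.sum_repr]
        _ = _ := by rw [map_sum]; simp [map_smul]
    have h3 := congrArg (fun w => ((B (j - 1 - 1)).repr w) e0') h2
    simp only [map_zero, Finsupp.coe_zero, Pi.zero_apply, map_sum, map_smul,
      Finset.sum_apply', Finsupp.smul_apply, smul_eq_mul] at h3
    rw [Finset.sum_eq_single e0] at h3
    · rw [he0', Module.Basis.repr_self, Finsupp.single_eq_same, mul_one] at h3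
      exact hc0 h3.symm
    · intro e _ hne'
      rcases hBcan (j - 1) e with h | ⟨e'', he''⟩
      · simp [h]
      · rw [he'', Module.Basis.repr_self, Finsupp.single_apply]
        have : ¬ e'' = e0' := by
          intro hcontra
          refine hne' (hBinj (j - 1) e e0 ?_ hne ?_)
          · rw [he'']; exact Module.Basis.ne_zero _ _
          · rw [he'', hcontra, he0']
        simp [this]
    · simp
  -- pairing function
  have hqq : ∀ e : ι j, D j (B j e) ≠ 0 → ∃ e' : ι (j - 1), D j (B j e) = B (j - 1) e' :=
    fun e h => (hBcan j e).resolve_left h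
  -- finsets
  set A : Finset (ι (j - 1)) := Finset.univ.filter
    (fun e' => B (j - 1) e' ∈ F i (j - 1) ∧ D (j - 1) (B (j - 1) e') = 0) with hA
  set T : Finset (ι j) := Finset.univ.filter
    (fun e => B j e ∈ F i j ∧ D j (B j e) ≠ 0) with hT
  set Pm : Finset (ι (j - 1)) := Finset.univ.filter
    (fun e' => B (j - 1) e' ∈ F i (j - 1) ∧ ∃ e : ι j, D j (B j e) = B (j - 1) e') with hPm
  set Pt : Finset (ι (j - 1)) := Finset.univ.filter
    (fun e' => ∃ e : ι j, D j (B j e) = B (j - 1) e' ∧ B j e ∈ F i j) with hPt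
  set U : Finset (ι (j - 1)) := Finset.univ.filter
    (fun e' => D (j - 1) (B (j - 1) e') = 0 ∧
      ¬ (∃ e : ι j, D j (B j e) = B (j - 1) e') ∧ B (j - 1) e' ∈ F i (j - 1)) with hU
  set Pin : Finset (ι (j - 1)) := Finset.univ.filter
    (fun e' => ∃ e : ι j, D j (B j e) = B (j - 1) e' ∧
      B (j - 1) e' ∈ F i (j - 1) ∧ ¬ B j e ∈ F i j) with hPin
  -- paired implies boundary zero
  have hpz : ∀ e' : ι (j - 1), (∃ e : ι j, D j (B j e) = B (j - 1) e') →
      D (j - 1) (B (j - 1) e') = 0 := by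
    rintro e' ⟨e, he⟩
    rw [← he]; exact hDD j (B j e)
  -- V = span over A
  set V : Submodule k (C (j - 1)) := F i (j - 1) ⊓ LinearMap.ker (D (j - 1)) with hV
  have hVA : V = Submodule.span k (⇑(B (j - 1)) '' ↑A) := by
    apply le_antisymm
    · rintro v ⟨hvF, hvK⟩
      rw [Module.Basis.mem_span_image]
      intro e he
      have hsupp : (e : ι (j - 1)) ∈ {e | B (j - 1) e ∈ F i (j - 1)} := by
        have := (Module.Basis.mem_span_image (b := B (j - 1))).mp (by rwa [← hspan (j - 1)])
        exact this he
      simp only [Finset.coe_filter, Set.mem_setOf_eq, Finset.mem_univ, true_and, hA]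
      exact ⟨hsupp, hker v hvK e (Finsupp.mem_support_iff.mp he)⟩
    · rw [Submodule.span_le]
      rintro _ ⟨e, he, rfl⟩
      simp only [Finset.coe_filter, Set.mem_setOf_eq, Finset.mem_univ, true_and, hA] at he
      exact ⟨he.1, he.2⟩
  -- W = span over T images
  set W : Submodule k (C (j - 1)) := Submodule.map (D j) (F i j) with hW
  have hWT : W = Submodule.span k ((fun e => D j (B j e)) '' ↑T) := by
    rw [hW, hspan j, Submodule.map_span, Set.image_image]
    apply le_antisymm
    · rw [Submodule.span_le]
      rintro _ ⟨e, he, rfl⟩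
      show D j (B j e) ∈ _
      by_cases h : D j (B j e) = 0
      · rw [h]; exact Submodule.zero_mem _
      · exact Submodule.subset_span ⟨e, Finset.mem_coe.mpr (Finset.mem_filter.mpr ⟨Finset.mem_univ _, he, h⟩), rfl⟩
    · apply Submodule.span_mono
      apply Set.image_mono
      intro e he
      simp only [Finset.coe_filter, Set.mem_setOf_eq, Finset.mem_univ, true_and, hT] at he
      exact he.1
  have hWV : W ≤ V := by
    rintro _ ⟨x, hx, rfl⟩
    exact ⟨hFsub i j x hx, hDD j x⟩
  -- finrank V = A.card
  have hrkV : Module.finrank k V = A.card := by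
    rw [hVA, Set.image_eq_range]
    have hli : LinearIndependent k (fun e : (↑A : Set (ι (j - 1))) => B (j - 1) e) :=
      (B (j - 1)).linearIndependent.comp _ Subtype.val_injective
    rw [finrank_span_eq_card hli]; simp
  -- finrank W = T.card
  have hrkW : Module.finrank k W = T.card := by
    rw [hWT, Set.image_eq_range]
    have hTne : ∀ e : (↑T : Set (ι j)), D j (B j (e : ι j)) ≠ 0 := by
      rintro ⟨e, he⟩
      simp only [Finset.coe_filter, Set.mem_setOf_eq, Finset.mem_univ, true_and, hT] at he
      exact he.2
    set q : (↑T : Set (ι j)) → ι (j - 1) := fun e => (hqq e (hTne e)).choose with hq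
    have hqs : ∀ e : (↑T : Set (ι j)), D j (B j (e : ι j)) = B (j - 1) (q e) :=
      fun e => (hqq e (hTne e)).choose_spec
    have hqi : Function.Injective q := by
      intro e e' heq
      have h1 : D j (B j (e : ι j)) = D j (B j (e' : ι j)) := by
        rw [hqs e, hqs e', heq]
      exact Subtype.ext (hBinj j _ _ (hTne e) (hTne e') h1)
    have hli : LinearIndependent k (fun e : (↑T : Set (ι j)) => D j (B j (e : ι j))) := by
      have : (fun e : (↑T : Set (ι j)) => D j (B j (e : ι j))) = (B (j - 1)) ∘ q := by
        funext e; exact hqs e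
      rw [this]
      exact (B (j - 1)).linearIndependent.comp q hqi
    rw [finrank_span_eq_card hli]; simp
  -- homology finrank
  have hquot : Module.finrank k
      (↥V ⧸ Submodule.comap V.subtype W) + Module.finrank k W = Module.finrank k V := by
    have h1 := Submodule.finrank_quotient_add_finrank (Submodule.comap V.subtype W)
    rwa [LinearEquiv.finrank_eq (Submodule.comapSubtypeEquivOfLe hWV)] at h1
  -- combinatorics: A.card = U.card + Pm.card
  have hAcard : A.card = Pm.card + U.card := by
    rw [← Finset.card_filter_add_card_filter_not
      (p := fun e' => ∃ e : ι j, D j (B j e) = B (j - 1) e') (s := A)]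
    congr 1
    · congr 1
      ext e'
      simp only [hA, hPm, Finset.mem_filter, Finset.mem_univ, true_and]
      constructor
      · rintro ⟨⟨h1, h2⟩, h3⟩; exact ⟨h1, h3⟩
      · rintro ⟨h1, h2⟩; exact ⟨⟨h1, hpz e' h2⟩, h2⟩
    · congr 1
      ext e'
      simp only [hA, hU, Finset.mem_filter, Finset.mem_univ, true_and]
      constructor
      · rintro ⟨⟨h1, h2⟩, h3⟩; exact ⟨h2, h3, h1⟩
      · rintro ⟨h1, h2, h3⟩; exact ⟨⟨h3, h1⟩, h2⟩
  -- Pm.card = Pt.card + Pin.card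
  have hPmcard : Pm.card = Pt.card + Pin.card := by
    rw [← Finset.card_filter_add_card_filter_not
      (p := fun e' => ∃ e : ι j, D j (B j e) = B (j - 1) e' ∧ B j e ∈ F i j) (s := Pm)]
    congr 1
    · congr 1
      ext e'
      simp only [hPm, hPt, Finset.mem_filter, Finset.mem_univ, true_and]
      constructor
      · rintro ⟨_, h2⟩; exact h2
      · rintro ⟨e, he, hF⟩
        refine ⟨⟨?_, ⟨e, he⟩⟩, ⟨e, he, hF⟩⟩
        rw [← he]; exact hFsub i j _ hF
    · congr 1
      ext e'
      simp only [hPm, hPin, Finset.mem_filter, Finset.mem_univ, true_and]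
      constructor
      · rintro ⟨⟨h1, e, he⟩, h3⟩
        refine ⟨e, he, h1, fun hF => h3 ⟨e, he, hF⟩⟩
      · rintro ⟨e, he, h1, h2⟩
        refine ⟨⟨h1, e, he⟩, ?_⟩
        rintro ⟨e2, he2, hF2⟩
        have : e2 = e := by
          refine hBinj j e2 e ?_ ?_ (by rw [he2, he])
          · rw [he2]; exact Module.Basis.ne_zero _ _
          · rw [he]; exact Module.Basis.ne_zero _ _
        exact h2 (this ▸ hF2)
  -- Pt.card = T.card
  have hPtcard : T.card = Pt.card := by
    have hTmem : ∀ e ∈ T, D j (B j e) ≠ 0 := by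
      intro e he
      simp only [hT, Finset.mem_filter, Finset.mem_univ, true_and] at he
      exact he.2
    refine Finset.card_bij (fun e he => (hqq e (hTmem e he)).choose) ?_ ?_ ?_
    · intro e he
      have hspec := (hqq e (hTmem e he)).choose_spec
      simp only [hT, Finset.mem_filter, Finset.mem_univ, true_and] at he
      simp only [hPt, Finset.mem_filter, Finset.mem_univ, true_and]
      exact ⟨e, hspec, he.1⟩
    · intro e1 h1 e2 h2 heq
      refine hBinj j e1 e2 (hTmem e1 h1) (hTmem e2 h2) ?_
      rw [(hqq e1 (hTmem e1 h1)).choose_spec, (hqq e2 (hTmem e2 h2)).choose_spec, heq]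
    · intro e' he'
      simp only [hPt, Finset.mem_filter, Finset.mem_univ, true_and] at he'
      obtain ⟨e, he, hF⟩ := he'
      have hne : D j (B j e) ≠ 0 := by rw [he]; exact Module.Basis.ne_zero _ _
      have heT : e ∈ T := by
        simp only [hT, Finset.mem_filter, Finset.mem_univ, true_and]
        exact ⟨hF, hne⟩
      refine ⟨e, heT, ?_⟩
      have hspec := (hqq e (hTmem e heT)).choose_spec
      exact (B (j - 1)).injective (by rw [← hspec, he])
  -- conclude
  omega
end

section
/- Let Θ be a path-connected topological space and f : Θ → ℝ a continuous function such that for every c ∈ ℝ the sublevel set Θ_{f ≤ c} = {θ ∈ Θ : f(θ) ≤ c} is locally path-connected. Let p ∈ Θ be a point such that there exists θ ∈ Θ with f(θ) < f(p). Then the merge value of p equals the min-max value over paths: C_f(p) = M_f(p), where C_f(p) = inf { c ∈ ℝ : the connected component of p in Θ_{f ≤ c} contains a point θ with f(θ) < f(p) } and M_f(p) = inf { max_{t ∈ [0,1]} f(γ(t)) : γ : [0,1] → Θ continuous, γ(0) = p, f(γ(1)) < f(p) }. -/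
open Set

/-! A path from `p` to a lower point stays in the sublevel set at its maximum, so it lies in the
connected component of `p` there; hence `C_f(p) ≤ M_f(p)`. Conversely, when the sublevel set
`{f ≤ c}` is locally path-connected its connected components are path components, so a lower
point in the component of `p` is reached by a path along which `f ≤ c`; hence `M_f(p) ≤ C_f(p)`.
The two sets of values are thus cofinal in each other, so their infima agree. -/

section PathComponents

variable {X : Type*} [TopologicalSpace X]

theorem pathComponentIn_eq_connectedComponentIn {F : Set X} [LocallyPathConnectedSpace F]
    (x : X) : pathComponentIn F x = connectedComponentIn F x := by
  by_cases hx : x ∈ F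
  · refine (isPathConnected_pathComponentIn hx).isConnected.isPreconnected
      |>.subset_connectedComponentIn (mem_pathComponentIn_self hx) pathComponentIn_subset
      |>.antisymm ?_
    rw [connectedComponentIn_eq_image hx, ← pathComponent_eq_connectedComponent]
    rintro _ ⟨y, hy, rfl⟩
    exact (joinedIn_iff_joined hx y.2).2 hy
  · rw [connectedComponentIn_eq_empty hx, ← not_nonempty_iff_eq_empty,
      pathComponentIn_nonempty_iff]
    exact hx

theorem mem_connectedComponentIn_of_range_subset {γ : unitInterval → X} (hγ : Continuous γ)
    {F : Set X} (hF : range γ ⊆ F) : γ 1 ∈ connectedComponentIn F (γ 0) :=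
  (isConnected_range hγ).isPreconnected.subset_connectedComponentIn ⟨0, rfl⟩ hF ⟨1, rfl⟩

end PathComponents

theorem merge_value_eq_path_minimax_general
    {Θ : Type*} [TopologicalSpace Θ]
    (f : Θ → ℝ) (hf : Continuous f)
    (hloc : ∀ c : ℝ, LocPathConnectedSpace ({θ : Θ | f θ ≤ c} : Set Θ))
    (p : Θ) :
    sInf {c : ℝ | ∃ θ ∈ connectedComponentIn {x : Θ | f x ≤ c} p, f θ < f p}
      = sInf {r : ℝ | ∃ γ : unitInterval → Θ, Continuous γ ∧ γ 0 = p ∧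
          f (γ 1) < f p ∧ r = ⨆ t : unitInterval, f (γ t)} := by
  refine csInf_eq_csInf_of_forall_exists_le ?_ ?_
  · rintro c ⟨θ, hθ, hθp⟩
    have : LocallyPathConnectedSpace {x : Θ | f x ≤ c} := hloc c
    rw [← pathComponentIn_eq_connectedComponentIn] at hθ
    refine ⟨_, ⟨hθ.somePath, hθ.somePath.continuous, hθ.somePath.source, ?_, rfl⟩,
      ciSup_le hθ.somePath_mem⟩
    rwa [hθ.somePath.target]
  · rintro r ⟨γ, hγ, rfl, hγ1, rfl⟩
    have hmax : range γ ⊆ {x | f x ≤ ⨆ t, f (γ t)} := by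
      rintro _ ⟨t, rfl⟩
      exact le_ciSup (isCompact_range (hf.comp hγ)).bddAbove t
    exact ⟨_, ⟨γ 1, mem_connectedComponentIn_of_range_subset hγ hmax, hγ1⟩, le_rfl⟩

/-- **Merge value equals path min-max value.**
Let `Θ` be a path-connected topological space and `f : Θ → ℝ` continuous, such that
every sublevel set `{θ | f θ ≤ c}` is locally path-connected (as a subspace).
Let `p` be a point such that some point has strictly smaller `f`-value.  Then the
merge value `C_f(p)` (the infimum of levels `c` at which the connected component of `p`
in the sublevel set `{f ≤ c}` contains a point of strictly smaller value) equals the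
min-max value `M_f(p)` over continuous paths starting at `p` and ending at a point of
strictly smaller value. -/
theorem merge_value_eq_path_minimax
    {Θ : Type*} [TopologicalSpace Θ] [PathConnectedSpace Θ]
    (f : Θ → ℝ) (hf : Continuous f)
    (hloc : ∀ c : ℝ, LocPathConnectedSpace ({θ : Θ | f θ ≤ c} : Set Θ))
    (p : Θ) (hp : ∃ θ : Θ, f θ < f p) :
    sInf {c : ℝ | ∃ θ ∈ connectedComponentIn {x : Θ | f x ≤ c} p, f θ < f p}
      = sInf {r : ℝ | ∃ γ : unitInterval → Θ, Continuous γ ∧ γ 0 = p ∧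
          f (γ 1) < f p ∧ r = ⨆ t : unitInterval, f (γ t)} :=
  merge_value_eq_path_minimax_general f hf hloc p
end

section
/- Let Θ be a topological space, f : Θ → ℝ continuous, and c₀ ∈ ℝ. Let A and B be two distinct connected components of the strict sublevel set {θ ∈ Θ : f(θ) < c₀} that are both contained in the same connected component of Θ_{f ≤ c₀} = {θ : f(θ) ≤ c₀}. Suppose p₁ ∈ A satisfies f(θ) ≥ f(p₁) for all θ ∈ A, and suppose there exists p₂ ∈ B with f(p₂) < f(p₁). Then: (i) for every c with f(p₁) ≤ c < c₀, every point θ of the connected component of p₁ in Θ_{f ≤ c} satisfies f(θ) ≥ f(p₁), i.e., p₁ is a minimum of f on its connected component of Θ_{f ≤ c}; and (ii) the connected component of p₁ in Θ_{f ≤ c₀} contains a point θ with f(θ) < f(p₁). In other words, p₁ appears as a new minimum in the set of minima of f on connected components of Θ_{f ≤ c} precisely when c decreases below c₀. -/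
theorem new_minimum_appears_below_saddle_general
    {Θ : Type*} [TopologicalSpace Θ] (f : Θ → ℝ) (c₀ : ℝ)
    (p₁ p₂ : Θ) (hp₂ : f p₂ < c₀)
    (hsame : connectedComponentIn {θ : Θ | f θ ≤ c₀} p₁ =
      connectedComponentIn {θ : Θ | f θ ≤ c₀} p₂)
    (hmin : ∀ θ ∈ connectedComponentIn {θ : Θ | f θ < c₀} p₁, f p₁ ≤ f θ)
    (hlow : f p₂ < f p₁) :
    (∀ c : ℝ, f p₁ ≤ c → c < c₀ →
      ∀ θ ∈ connectedComponentIn {x : Θ | f x ≤ c} p₁, f p₁ ≤ f θ) ∧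
    (∃ θ ∈ connectedComponentIn {x : Θ | f x ≤ c₀} p₁, f θ < f p₁) := by
  refine ⟨fun c _ hc θ hθ => hmin θ ?_, p₂, ?_, hlow⟩
  · exact connectedComponentIn_mono p₁ (fun x (hx : f x ≤ c) => hx.trans_lt hc) hθ
  · exact hsame ▸ mem_connectedComponentIn hp₂.le

/-- **A 1-saddle gives birth (going downwards) to a new minimum on connected components
of sublevel sets.**  Let `A` and `B` be the (distinct) connected components of `p₁` and
`p₂` in the strict sublevel set `{f < c₀}`, both contained in the same connected
component of the closed sublevel set `{f ≤ c₀}`.  Suppose `p₁` is a minimum point of `f`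
on `A` and `f p₂ < f p₁`.  Then (i) for every `c` with `f p₁ ≤ c < c₀`, the point `p₁`
is a minimum of `f` on its connected component in `{f ≤ c}`; and (ii) the connected
component of `p₁` in `{f ≤ c₀}` contains a point of strictly smaller value than `f p₁`. -/
theorem new_minimum_appears_below_saddle
    {Θ : Type*} [TopologicalSpace Θ] (f : Θ → ℝ) (hf : Continuous f) (c₀ : ℝ)
    (p₁ p₂ : Θ) (hp₁ : f p₁ < c₀) (hp₂ : f p₂ < c₀)
    (hdistinct : connectedComponentIn {θ : Θ | f θ < c₀} p₁ ≠
      connectedComponentIn {θ : Θ | f θ < c₀} p₂)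
    (hsame : connectedComponentIn {θ : Θ | f θ ≤ c₀} p₁ =
      connectedComponentIn {θ : Θ | f θ ≤ c₀} p₂)
    (hmin : ∀ θ ∈ connectedComponentIn {θ : Θ | f θ < c₀} p₁, f p₁ ≤ f θ)
    (hlow : f p₂ < f p₁) :
    (∀ c : ℝ, f p₁ ≤ c → c < c₀ →
      ∀ θ ∈ connectedComponentIn {x : Θ | f x ≤ c} p₁, f p₁ ≤ f θ) ∧
    (∃ θ ∈ connectedComponentIn {x : Θ | f x ≤ c₀} p₁, f θ < f p₁) :=
  new_minimum_appears_below_saddle_general f c₀ p₁ p₂ hp₂ hsame hmin hlow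
end

section
/- Let k be a field and let C_* be a chain complex of finite-dimensional k-vector spaces with differentials ∂ satisfying ∂∘∂ = 0, equipped with an ℝ-filtration by subcomplexes F_{s_1}C_* ⊆ ... ⊆ F_{s_max}C_* = C_*, and let {e_l^{(n)}} be a filtration-compatible basis, with the basis of each degree ordered compatibly with the filtration. Suppose the differential is already in canonical form on all basis vectors of degree n < j and on the first i basis vectors of degree j; that is, for each such basis vector e, either ∂e = 0 or ∂e = e' for a basis vector e' of one degree lower, with distinct such e having distinct images. Then there exists a new filtration-compatible basis, obtained from the old one by replacing e_{i+1}^{(j)} by e_{i+1}^{(j)} minus a linear combination of e_q^{(j)} with q ≤ i (rescaled by a nonzero scalar), and possibly replacing one basis vector e_{k₀}^{(j-1)} by e_{k₀}^{(j-1)} plus a linear combination of lower basis vectors e_k^{(j-1)} with k < k₀, such that the differential is in canonical form on all basis vectors of degree n < j and on the first i+1 basis vectors of degree j, and the differential on the basis vectors where it was already in canonical form is unchanged. -/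
open Finset in
lemma exists_basis_update {k : Type*} [Field k] {V : Type*} [AddCommGroup V] [Module k V]
    {N : ℕ} (B : Module.Basis (Fin N) k V) (i0 : Fin N) (c : k) (hc : c ≠ 0) (γ : Fin N → k) :
    ∃ B' : Module.Basis (Fin N) k V,
      B' i0 = c • B i0 + ∑ q ∈ Finset.univ.filter (fun q => q < i0), γ q • B q ∧
      (∀ e, e ≠ i0 → B' e = B e) ∧
      (∀ r : ℕ, Submodule.span k (⇑B' '' {e | (e : ℕ) < r}) =
        Submodule.span k (⇑B '' {e | (e : ℕ) < r})) := by
  classical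
  set w : Fin N → V := fun e => if e = i0 then
      c • B i0 + ∑ q ∈ Finset.univ.filter (fun q => q < i0), γ q • B q else B e with hw
  set w' : Fin N → V := fun e => if e = i0 then
      c⁻¹ • B i0 - ∑ q ∈ Finset.univ.filter (fun q => q < i0), (c⁻¹ * γ q) • B q
      else B e with hw'
  have hwne : ∀ e, e ≠ i0 → w e = B e := fun e he => by simp [hw, he]
  have hw'ne : ∀ e, e ≠ i0 → w' e = B e := fun e he => by simp [hw', he]
  set T := B.constr (M' := V) k w with hT
  set T' := B.constr (M' := V) k w' with hT'
  have hTB : ∀ e, T (B e) = w e := fun e => B.constr_basis k w e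
  have hT'B : ∀ e, T' (B e) = w' e := fun e => B.constr_basis k w' e
  have h1 : T' ∘ₗ T = LinearMap.id := by
    apply B.ext
    intro e
    by_cases he : e = i0
    · subst he
      simp only [LinearMap.comp_apply, LinearMap.id_apply, hTB]
      simp only [hw, if_pos rfl]
      rw [map_add, map_smul, map_sum, hT'B]
      simp only [hw', if_pos rfl]
      have : ∀ q ∈ Finset.univ.filter (fun q => q < e), T' (γ q • B q) = γ q • B q := by
        intro q hq
        simp only [Finset.mem_filter] at hq
        rw [map_smul, hT'B, hw'ne q (ne_of_lt hq.2)]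
      rw [Finset.sum_congr rfl this]
      rw [smul_sub, smul_smul, mul_inv_cancel₀ hc, one_smul, Finset.smul_sum]
      have : ∀ q ∈ Finset.univ.filter (fun q => q < e),
          c • (c⁻¹ * γ q) • B q = γ q • B q := by
        intro q hq
        rw [smul_smul, ← mul_assoc, mul_inv_cancel₀ hc, one_mul]
      rw [Finset.sum_congr rfl this]
      abel
    · simp only [LinearMap.comp_apply, LinearMap.id_apply, hTB, hwne e he, hT'B,
        hw'ne e he]
  have h2 : T ∘ₗ T' = LinearMap.id := by
    apply B.ext
    intro e
    by_cases he : e = i0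
    · subst he
      simp only [LinearMap.comp_apply, LinearMap.id_apply, hT'B]
      simp only [hw', if_pos rfl]
      rw [map_sub, map_smul, map_sum, hTB]
      simp only [hw, if_pos rfl]
      have : ∀ q ∈ Finset.univ.filter (fun q => q < e), T ((c⁻¹ * γ q) • B q)
          = (c⁻¹ * γ q) • B q := by
        intro q hq
        simp only [Finset.mem_filter] at hq
        rw [map_smul, hTB, hwne q (ne_of_lt hq.2)]
      rw [Finset.sum_congr rfl this]
      rw [smul_add, smul_smul, inv_mul_cancel₀ hc, one_smul, Finset.smul_sum]
      have : ∀ q ∈ Finset.univ.filter (fun q => q < e),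
          c⁻¹ • γ q • B q = (c⁻¹ * γ q) • B q := by
        intro q hq; rw [smul_smul]
      rw [Finset.sum_congr rfl this]
      abel
    · simp only [LinearMap.comp_apply, LinearMap.id_apply, hT'B, hw'ne e he, hTB,
        hwne e he]
  set eqv := LinearEquiv.ofLinear T T' h2 h1 with heqv
  refine ⟨B.map eqv, ?_, ?_, ?_⟩
  · rw [Module.Basis.map_apply]
    show T (B i0) = _
    rw [hTB]; simp [hw]
  · intro e he
    rw [Module.Basis.map_apply]
    show T (B e) = _
    rw [hTB, hwne e he]
  · intro r
    have hmap : ∀ e, (B.map eqv) e = w e := by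
      intro e; rw [Module.Basis.map_apply]; exact hTB e
    by_cases hr : (i0 : ℕ) < r
    · apply le_antisymm
      · rw [Submodule.span_le]
        rintro x ⟨e, he, rfl⟩
        simp only [Set.mem_setOf_eq] at he
        rw [hmap]
        by_cases hei : e = i0
        · subst hei
          simp only [hw, if_pos rfl]
          apply Submodule.add_mem
          · exact Submodule.smul_mem _ _ (Submodule.subset_span ⟨e, he, rfl⟩)
          · apply Submodule.sum_mem
            intro q hq
            simp only [Finset.mem_filter] at hq
            have hq2 : (q : ℕ) < (e : ℕ) := hq.2
            exact Submodule.smul_mem _ _ (Submodule.subset_span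
              ⟨q, lt_trans hq2 he, rfl⟩)
        · rw [hwne e hei]
          exact Submodule.subset_span ⟨e, he, rfl⟩
      · rw [Submodule.span_le]
        rintro x ⟨e, he, rfl⟩
        simp only [Set.mem_setOf_eq] at he
        by_cases hei : e = i0
        · subst hei
          have : B e = c⁻¹ • (B.map eqv) e - ∑ q ∈ Finset.univ.filter (fun q => q < e),
              (c⁻¹ * γ q) • (B.map eqv) q := by
            rw [hmap]
            simp only [hw, if_pos rfl]
            rw [smul_add, smul_smul, inv_mul_cancel₀ hc, one_smul, Finset.smul_sum]
            have : ∀ q ∈ Finset.univ.filter (fun q => q < e),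
                (c⁻¹ * γ q) • (B.map eqv) q = c⁻¹ • γ q • B q := by
              intro q hq
              simp only [Finset.mem_filter] at hq
              rw [hmap, hwne q (ne_of_lt hq.2), smul_smul]
            rw [Finset.sum_congr rfl this]
            abel
          rw [this]
          apply Submodule.sub_mem
          · exact Submodule.smul_mem _ _ (Submodule.subset_span ⟨e, he, rfl⟩)
          · apply Submodule.sum_mem
            intro q hq
            simp only [Finset.mem_filter] at hq
            have hq2 : (q : ℕ) < (e : ℕ) := hq.2
            exact Submodule.smul_mem _ _ (Submodule.subset_span
              ⟨q, lt_trans hq2 he, rfl⟩)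
        · rw [← hwne e hei, ← hmap]
          exact Submodule.subset_span ⟨e, he, rfl⟩
    · have : ∀ e ∈ {e : Fin N | (e : ℕ) < r}, (B.map eqv) e = B e := by
        intro e he
        simp only [Set.mem_setOf_eq] at he
        rw [hmap, hwne]
        intro h; subst h; exact hr he
      rw [Set.image_congr this]

/-- **The inductive step of the reduction to canonical form.**
Let `C` be an ℝ-filtered chain complex of finite-dimensional vector spaces over a field
`k`, concentrated in degrees `0, …, n`, with an ordered filtration-compatible basis
`B` (each filtration subspace is spanned by an initial segment of the basis of each
degree).  Suppose the differential is already in canonical form on all basis vectors of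
degree `< j` and on the first `i` basis vectors of degree `j` (with the corresponding
injectivity).  Then there is a new ordered filtration-compatible basis `B'`, obtained
from `B` by replacing the `(i+1)`-st degree-`j` basis vector by itself minus a linear
combination of earlier degree-`j` basis vectors, rescaled by a nonzero scalar, and
possibly replacing a single degree-`(j-1)` basis vector `e_{k₀}` by itself plus a
linear combination of earlier degree-`(j-1)` basis vectors, leaving all other basis
vectors unchanged, such that the differential is in canonical form on all basis vectors
of degree `< j` and on the first `i+1` basis vectors of degree `j`, and the canonical
pattern of the differential on the basis vectors where it was already canonical is
unchanged. -/
theorem canonical_form_inductive_step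
    (k : Type*) [Field k]
    (C : ℤ → Type*) [∀ j, AddCommGroup (C j)] [∀ j, Module k (C j)]
    [∀ j, FiniteDimensional k (C j)]
    (n : ℕ) (hbound : ∀ j : ℤ, (j < 0 ∨ (n : ℤ) < j) → ∀ x : C j, x = 0)
    (D : ∀ j : ℤ, C j →ₗ[k] C (j - 1))
    (hDD : ∀ (j : ℤ) (x : C j), D (j - 1) (D j x) = 0)
    (m : ℕ) (s : Fin (m + 1) → ℝ) (hs : StrictMono s)
    (F : Fin (m + 1) → ∀ j : ℤ, Submodule k (C j))
    (hFmono : ∀ i i' : Fin (m + 1), i ≤ i' → ∀ j : ℤ, F i j ≤ F i' j)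
    (hFtop : ∀ j : ℤ, F (Fin.last m) j = ⊤)
    (hFsub : ∀ (i : Fin (m + 1)) (j : ℤ), ∀ x ∈ F i j, D j x ∈ F i (j - 1))
    (d : ℤ → ℕ) (B : ∀ j : ℤ, Module.Basis (Fin (d j)) k (C j))
    (hBcompat : ∀ (i' : Fin (m + 1)) (j : ℤ), ∃ r : ℕ,
        F i' j = Submodule.span k (⇑(B j) '' {e : Fin (d j) | (e : ℕ) < r}))
    (j : ℤ) (i : ℕ) (hi : i < d j)
    -- the differential is canonical on degrees `< j` and the first `i` vectors of degree `j`: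
    (hcan : ∀ (p : ℤ) (e : Fin (d p)), (p < j ∨ (p = j ∧ (e : ℕ) < i)) →
        (D p (B p e) = 0 ∨ ∃ e' : Fin (d (p - 1)), D p (B p e) = B (p - 1) e'))
    (hinj : ∀ (p : ℤ) (e e' : Fin (d p)),
        (p < j ∨ (p = j ∧ (e : ℕ) < i)) → (p < j ∨ (p = j ∧ (e' : ℕ) < i)) →
        D p (B p e) ≠ 0 → D p (B p e) = D p (B p e') → e = e') :
    ∃ B' : ∀ p : ℤ, Module.Basis (Fin (d p)) k (C p),
      -- the new basis is filtration-compatible (spans of initial segments):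
      (∀ (i' : Fin (m + 1)) (p : ℤ), ∃ r : ℕ,
          F i' p = Submodule.span k (⇑(B' p) '' {e : Fin (d p) | (e : ℕ) < r})) ∧
      -- the `(i+1)`-st degree-`j` vector is replaced by itself minus a combination of
      -- earlier degree-`j` vectors, rescaled by a nonzero scalar:
      (∃ c : k, c ≠ 0 ∧ ∃ α : Fin (d j) → k,
          B' j ⟨i, hi⟩ = c • (B j ⟨i, hi⟩ -
            ∑ q ∈ Finset.univ.filter (fun q : Fin (d j) => (q : ℕ) < i),
              α q • B j q)) ∧
      -- all other degree-`j` vectors are unchanged: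
      (∀ e : Fin (d j), (e : ℕ) ≠ i → B' j e = B j e) ∧
      -- all vectors in degrees other than `j` and `j - 1` are unchanged:
      (∀ p : ℤ, p ≠ j → p ≠ j - 1 → ∀ e : Fin (d p), B' p e = B p e) ∧
      -- in degree `j - 1`, either nothing changes, or a single vector `e_{k₀}` is
      -- replaced by itself plus a combination of earlier degree-`(j-1)` vectors:
      ((∀ e : Fin (d (j - 1)), B' (j - 1) e = B (j - 1) e) ∨
        ∃ (k₀ : Fin (d (j - 1))) (β : Fin (d (j - 1)) → k),
          B' (j - 1) k₀ = B (j - 1) k₀ +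
            ∑ kk ∈ Finset.univ.filter (fun kk : Fin (d (j - 1)) => kk < k₀),
              β kk • B (j - 1) kk ∧
          ∀ e : Fin (d (j - 1)), e ≠ k₀ → B' (j - 1) e = B (j - 1) e) ∧
      -- the canonical pattern of the differential is unchanged where it already held:
      (∀ (p : ℤ) (e : Fin (d p)), (p < j ∨ (p = j ∧ (e : ℕ) < i)) →
          (D p (B p e) = 0 → D p (B' p e) = 0) ∧
          (∀ e' : Fin (d (p - 1)), D p (B p e) = B (p - 1) e' →
            D p (B' p e) = B' (p - 1) e')) ∧
      -- the differential is canonical on degrees `< j` and the first `i + 1` vectors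
      -- of degree `j`:
      (∀ (p : ℤ) (e : Fin (d p)), (p < j ∨ (p = j ∧ (e : ℕ) < i + 1)) →
          (D p (B' p e) = 0 ∨ ∃ e' : Fin (d (p - 1)), D p (B' p e) = B' (p - 1) e')) ∧
      (∀ (p : ℤ) (e e' : Fin (d p)),
          (p < j ∨ (p = j ∧ (e : ℕ) < i + 1)) → (p < j ∨ (p = j ∧ (e' : ℕ) < i + 1)) →
          D p (B' p e) ≠ 0 → D p (B' p e) = D p (B' p e') → e = e') := by
  classical
  set idx : Fin (d j) := ⟨i, hi⟩ with hidxdef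
  have hidxval : (idx : ℕ) = i := rfl
  set x : C (j - 1) := D j (B j idx) with hxdef
  set α : Fin (d j) → k := fun q =>
    if h : ∃ e', D j (B j q) = B (j - 1) e' then (B (j - 1)).repr x h.choose else 0
    with hαdef
  set y : C j := B j idx -
      ∑ q ∈ Finset.univ.filter (fun q : Fin (d j) => (q : ℕ) < i), α q • B j q
    with hydef
  set x' : C (j - 1) := D j y with hx'def
  -- expansion of x'
  have hx'eq : x' = x - ∑ q ∈ Finset.univ.filter (fun q : Fin (d j) => (q : ℕ) < i),
      α q • D j (B j q) := by
    rw [hx'def, hydef, map_sub, map_sum]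
    simp only [map_smul]
    rfl
  -- claim 1: coefficients of x' at targets of earlier degree-j vectors vanish
  have claim1 : ∀ q : Fin (d j), (q : ℕ) < i → ∀ e', D j (B j q) = B (j - 1) e' →
      (B (j - 1)).repr x' e' = 0 := by
    intro q hq e' hDe
    have hrepr : (B (j - 1)).repr x' e' = (B (j - 1)).repr x e' -
        ∑ q' ∈ Finset.univ.filter (fun q' : Fin (d j) => (q' : ℕ) < i),
          α q' * (B (j - 1)).repr (D j (B j q')) e' := by
      rw [hx'eq, map_sub, map_sum]
      simp only [map_smul, Finsupp.coe_sub, Pi.sub_apply, Finsupp.coe_finset_sum,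
        Finset.sum_apply, Finsupp.smul_apply, smul_eq_mul]
    rw [hrepr]
    have hsum : ∑ q' ∈ Finset.univ.filter (fun q' : Fin (d j) => (q' : ℕ) < i),
        α q' * (B (j - 1)).repr (D j (B j q')) e' = (B (j - 1)).repr x e' := by
      rw [Finset.sum_eq_single q]
      · have hex : ∃ e'', D j (B j q) = B (j - 1) e'' := ⟨e', hDe⟩
        have hch : hex.choose = e' :=
          (B (j - 1)).injective (hex.choose_spec.symm.trans hDe)
        rw [hαdef]
        simp only [dif_pos hex]
        rw [hch, hDe, Module.Basis.repr_self, Finsupp.single_apply, if_pos rfl, mul_one]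
      · intro q'' hq'' hne
        simp only [Finset.mem_filter, Finset.mem_univ, true_and] at hq''
        by_cases h0 : D j (B j q'') = 0
        · rw [h0, map_zero]; simp
        · obtain ⟨t, ht⟩ := (hcan j q'' (Or.inr ⟨rfl, hq''⟩)).resolve_left h0
          rw [ht, Module.Basis.repr_self, Finsupp.single_apply]
          by_cases hte : t = e'
          · exfalso
            apply hne
            apply hinj j q'' q (Or.inr ⟨rfl, hq''⟩) (Or.inr ⟨rfl, hq⟩) h0
            rw [ht, hte, ← hDe]
          · rw [if_neg hte, mul_zero]
      · intro hq'
        exfalso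
        exact hq' (by simp [hq])
    rw [hsum, sub_self]
  -- claim 2: basis vectors with nonzero coefficient in x' have zero differential
  have claim2 : ∀ kk : Fin (d (j - 1)), (B (j - 1)).repr x' kk ≠ 0 →
      D (j - 1) (B (j - 1) kk) = 0 := by
    intro kk hkk
    by_contra hne
    obtain ⟨t, ht⟩ := (hcan (j - 1) kk (Or.inl (by omega))).resolve_left hne
    have hzero : D (j - 1) x' = 0 := by rw [hx'def]; exact hDD j y
    have hexp : x' = ∑ kk' : Fin (d (j - 1)), (B (j - 1)).repr x' kk' • B (j - 1) kk' :=
      ((B (j - 1)).sum_repr x').symm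
    have : (B (j - 1 - 1)).repr (D (j - 1) x') t = 0 := by rw [hzero, map_zero]; rfl
    rw [hexp, map_sum] at this
    simp only [map_smul, Finsupp.coe_finset_sum, Finset.sum_apply, Finsupp.smul_apply,
      smul_eq_mul, map_sum] at this
    rw [Finset.sum_eq_single kk] at this
    · rw [ht, Module.Basis.repr_self, Finsupp.single_apply, if_pos rfl, mul_one] at this
      exact hkk this
    · intro kk' _ hne'
      by_cases h0 : D (j - 1) (B (j - 1) kk') = 0
      · rw [h0, map_zero]; simp
      · obtain ⟨t', ht'⟩ := (hcan (j - 1) kk' (Or.inl (by omega))).resolve_left h0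
        rw [ht', Module.Basis.repr_self, Finsupp.single_apply]
        by_cases htt : t' = t
        · exfalso
          apply hne'
          apply hinj (j - 1) kk' kk (Or.inl (by omega)) (Or.inl (by omega)) h0
          rw [ht', htt, ← ht]
        · rw [if_neg htt, mul_zero]
    · intro h; exact absurd (Finset.mem_univ kk) h
  have hfiltj : Finset.univ.filter (fun q : Fin (d j) => q < idx) =
      Finset.univ.filter (fun q : Fin (d j) => (q : ℕ) < i) := by
    apply Finset.filter_congr
    intro q _
    simp [Fin.lt_def, hidxdef]
  have hmain : ∃ c : k, c ≠ 0 ∧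
      ∃ (Bj' : Module.Basis (Fin (d j)) k (C j)) (Bjm1' : Module.Basis (Fin (d (j - 1))) k (C (j - 1))),
        Bj' idx = c • y ∧
        (∀ e, e ≠ idx → Bj' e = B j e) ∧
        (∀ r : ℕ, Submodule.span k (⇑Bj' '' {e | (e : ℕ) < r}) =
          Submodule.span k (⇑(B j) '' {e | (e : ℕ) < r})) ∧
        (∀ r : ℕ, Submodule.span k (⇑Bjm1' '' {e | (e : ℕ) < r}) =
          Submodule.span k (⇑(B (j - 1)) '' {e | (e : ℕ) < r})) ∧
        ((D j (c • y) = 0 ∧ ∀ e, Bjm1' e = B (j - 1) e) ∨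
         (∃ k₀ : Fin (d (j - 1)),
            D j (c • y) = Bjm1' k₀ ∧
            D (j - 1) (Bjm1' k₀) = 0 ∧
            (∀ e, e ≠ k₀ → Bjm1' e = B (j - 1) e) ∧
            (∀ q : Fin (d j), (q : ℕ) < i → ∀ e', D j (B j q) = B (j - 1) e' → e' ≠ k₀) ∧
            D (j - 1) (B (j - 1) k₀) = 0 ∧
            (∃ β : Fin (d (j - 1)) → k, Bjm1' k₀ = B (j - 1) k₀ +
              ∑ kk ∈ Finset.univ.filter (fun kk => kk < k₀), β kk • B (j - 1) kk))) := by
    by_cases hx0 : x' = 0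
    · -- case 1 : no pairing needed
      obtain ⟨Bj', hspec, hne, hspan⟩ :=
        exists_basis_update (B j) idx (1 : k) one_ne_zero (fun q => -α q)
      refine ⟨1, one_ne_zero, Bj', B (j - 1), ?_, hne, hspan, fun r => rfl,
        Or.inl ⟨?_, fun e => rfl⟩⟩
      · rw [hspec, hfiltj, one_smul, one_smul, hydef]
        rw [sub_eq_add_neg, ← Finset.sum_neg_distrib]
        congr 1
        apply Finset.sum_congr rfl
        intro q _
        rw [neg_smul]
      · rw [one_smul, ← hx'def, hx0]
    · -- case 2 : pair with the top nonzero coefficient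
      have hrepr0 : (B (j - 1)).repr x' ≠ 0 := by
        intro h
        exact hx0 (by simpa using congrArg ((B (j - 1)).repr.symm) h)
      have hsupp : ((B (j - 1)).repr x').support.Nonempty :=
        Finsupp.support_nonempty_iff.mpr hrepr0
      set k₀ : Fin (d (j - 1)) := ((B (j - 1)).repr x').support.max' hsupp with hk₀def
      set c0 : k := (B (j - 1)).repr x' k₀ with hc0def
      have hc0 : c0 ≠ 0 := by
        have := Finset.max'_mem _ hsupp
        rw [Finsupp.mem_support_iff] at this
        exact this
      have hmax : ∀ kk, k₀ < kk → (B (j - 1)).repr x' kk = 0 := by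
        intro kk hkk
        by_contra h
        have := Finset.le_max' _ kk (Finsupp.mem_support_iff.mpr h)
        rw [← hk₀def] at this
        exact absurd hkk (not_lt.mpr this)
      -- expansion of x' as combination of basis vectors up to k₀
      have hexpand : c0⁻¹ • x' = B (j - 1) k₀ +
          ∑ kk ∈ Finset.univ.filter (fun kk => kk < k₀),
            (c0⁻¹ * (B (j - 1)).repr x' kk) • B (j - 1) kk := by
        have hsum : x' = ∑ kk : Fin (d (j - 1)), (B (j - 1)).repr x' kk • B (j - 1) kk :=
          ((B (j - 1)).sum_repr x').symm
        have hsplit : ∑ kk : Fin (d (j - 1)), (B (j - 1)).repr x' kk • B (j - 1) kk =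
            c0 • B (j - 1) k₀ + ∑ kk ∈ Finset.univ.filter (fun kk => kk < k₀),
              (B (j - 1)).repr x' kk • B (j - 1) kk := by
          rw [← Finset.add_sum_erase _ _ (Finset.mem_univ k₀), ← hc0def]
          congr 1
          have hsub : Finset.univ.filter (fun kk => kk < k₀) ⊆ Finset.univ.erase k₀ := by
            intro kk hkk
            simp only [Finset.mem_filter, Finset.mem_univ, true_and] at hkk
            exact Finset.mem_erase.mpr ⟨ne_of_lt hkk, Finset.mem_univ kk⟩
          refine (Finset.sum_subset hsub ?_).symm
          intro kk hkk hkk2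
          simp only [Finset.mem_erase, Finset.mem_univ, and_true] at hkk
          simp only [Finset.mem_filter, Finset.mem_univ, true_and] at hkk2
          have : k₀ < kk := lt_of_le_of_ne (not_lt.mp hkk2) (Ne.symm hkk)
          rw [hmax kk this, zero_smul]
        have hx'split := hsum.trans hsplit
        conv_lhs => rw [hx'split]
        rw [smul_add, smul_smul, inv_mul_cancel₀ hc0, one_smul, Finset.smul_sum]
        congr 1
        apply Finset.sum_congr rfl
        intro kk _
        rw [smul_smul]
      obtain ⟨Bj', hspec, hne, hspan⟩ :=
        exists_basis_update (B j) idx c0⁻¹ (inv_ne_zero hc0) (fun q => -(c0⁻¹ * α q))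
      obtain ⟨Bm', hspecm, hnem, hspanm⟩ :=
        exists_basis_update (B (j - 1)) k₀ (1 : k) one_ne_zero
          (fun kk => c0⁻¹ * (B (j - 1)).repr x' kk)
      have hBjidx : Bj' idx = c0⁻¹ • y := by
        rw [hspec, hfiltj, hydef, smul_sub, Finset.smul_sum, sub_eq_add_neg,
          ← Finset.sum_neg_distrib]
        congr 1
        apply Finset.sum_congr rfl
        intro q _
        rw [neg_smul, smul_smul]
      have hBmk₀ : Bm' k₀ = c0⁻¹ • x' := by
        rw [hspecm, one_smul, hexpand]
      have hDcy : D j (c0⁻¹ • y) = Bm' k₀ := by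
        rw [map_smul, ← hx'def, hBmk₀]
      refine ⟨c0⁻¹, inv_ne_zero hc0, Bj', Bm', hBjidx, hne, hspan, hspanm,
        Or.inr ⟨k₀, hDcy, ?_, hnem, ?_, ?_, ⟨fun kk => c0⁻¹ * (B (j - 1)).repr x' kk, ?_⟩⟩⟩
      · rw [hBmk₀, map_smul, hx'def, hDD j y, smul_zero]
      · intro q hq e' hDe hek
        have := claim1 q hq e' hDe
        rw [hek] at this
        exact hc0 this
      · exact claim2 k₀ hc0
      · rw [hspecm, one_smul]
  obtain ⟨c, hc, Bj', Bm', hBjidx, hBjne, hspanj, hspanm, hcase⟩ := hmain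
  set B' : ∀ p : ℤ, Module.Basis (Fin (d p)) k (C p) := fun p =>
    if h : p = j then h ▸ Bj' else if h' : p = j - 1 then h' ▸ Bm' else B p with hB'def
  have hj1 : (j - 1 : ℤ) ≠ j := by omega
  have hB'j : B' j = Bj' := by simp [hB'def]
  have hB'm : B' (j - 1) = Bm' := by simp [hB'def, hj1]
  have hB'o : ∀ p, p ≠ j → p ≠ j - 1 → B' p = B p := by
    intro p h1 h2; simp [hB'def, h1, h2]
  -- pattern preservation
  have hpres : ∀ (p : ℤ) (e : Fin (d p)), (p < j ∨ (p = j ∧ (e : ℕ) < i)) →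
      (D p (B p e) = 0 → D p (B' p e) = 0) ∧
      (∀ e' : Fin (d (p - 1)), D p (B p e) = B (p - 1) e' →
        D p (B' p e) = B' (p - 1) e') := by
    rintro p e (hp | ⟨rfl, he⟩)
    · by_cases hp1 : p = j - 1
      · subst hp1
        have hpm : (j - 1 - 1 : ℤ) ≠ j := by omega
        have hpm2 : (j - 1 - 1 : ℤ) ≠ j - 1 := by omega
        rw [hB'm, hB'o _ hpm hpm2]
        rcases hcase with ⟨hD0, hall⟩ | ⟨k₀, hDk, hDm0, hnem, htgt, hDB0, hβ⟩
        · rw [hall e]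
          exact ⟨fun h => h, fun e' h => h⟩
        · by_cases hek : e = k₀
          · subst hek
            refine ⟨fun _ => hDm0, fun e' h => absurd ?_ ((B (j - 1 - 1)).ne_zero e')⟩
            rw [hDB0] at h
            exact h.symm
          · rw [hnem e hek]
            exact ⟨fun h => h, fun e' h => h⟩
      · have hpj : p ≠ j := by omega
        have h1 : (p - 1 : ℤ) ≠ j := by omega
        have h2 : (p - 1 : ℤ) ≠ j - 1 := by omega
        rw [hB'o p hpj hp1, hB'o _ h1 h2]
        exact ⟨fun h => h, fun e' h => h⟩
    · have hee : e ≠ idx := by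
        intro h
        apply Nat.ne_of_lt he
        rw [h]
      rw [hB'j, hBjne e hee, hB'm]
      refine ⟨fun h => h, fun e' h => ?_⟩
      rcases hcase with ⟨hD0, hall⟩ | ⟨k₀, hDk, hDm0, hnem, htgt, hDB0, hβ⟩
      · rw [hall e']; exact h
      · rw [hnem e' (htgt e he e' h)]; exact h
  -- new canonical form
  have hcan' : ∀ (p : ℤ) (e : Fin (d p)), (p < j ∨ (p = j ∧ (e : ℕ) < i + 1)) →
      (D p (B' p e) = 0 ∨ ∃ e' : Fin (d (p - 1)), D p (B' p e) = B' (p - 1) e') := by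
    rintro p e hp
    by_cases hscope : p < j ∨ (p = j ∧ (e : ℕ) < i)
    · rcases hcan p e hscope with h0 | ⟨e', he'⟩
      · exact Or.inl ((hpres p e hscope).1 h0)
      · exact Or.inr ⟨e', (hpres p e hscope).2 e' he'⟩
    · have hpj : p = j := by
        rcases hp with h | ⟨h, _⟩
        · exact absurd (Or.inl h) hscope
        · exact h
      subst hpj
      have henot : ¬((e : ℕ) < i) := fun h => hscope (Or.inr ⟨rfl, h⟩)
      have heval : (e : ℕ) = i := by
        rcases hp with h | ⟨_, h⟩
        · omega
        · omega
      have heidx : e = idx := Fin.ext heval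
      rw [heidx, hB'j, hBjidx]
      rcases hcase with ⟨hD0, hall⟩ | ⟨k₀, hDk, hDm0, hnem, htgt, hDB0, hβ⟩
      · exact Or.inl hD0
      · refine Or.inr ⟨k₀, ?_⟩
        rw [hB'm]
        exact hDk
  -- new injectivity
  have hinj' : ∀ (p : ℤ) (e e' : Fin (d p)),
      (p < j ∨ (p = j ∧ (e : ℕ) < i + 1)) → (p < j ∨ (p = j ∧ (e' : ℕ) < i + 1)) →
      D p (B' p e) ≠ 0 → D p (B' p e) = D p (B' p e') → e = e' := by
    rintro p e e' hp hp' hne heq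
    by_cases hpj : p = j
    · subst hpj
      have hei : (e : ℕ) < i + 1 := by
        rcases hp with h | ⟨_, h⟩
        · omega
        · exact h
      have hei' : (e' : ℕ) < i + 1 := by
        rcases hp' with h | ⟨_, h⟩
        · omega
        · exact h
      by_cases he1 : e = idx <;> by_cases he2 : e' = idx
      · rw [he1, he2]
      · exfalso
        have he2i : (e' : ℕ) < i := by
          have : (e' : ℕ) ≠ i := fun h => he2 (Fin.ext h)
          omega
        rw [hB'j] at hne heq
        rw [he1, hBjidx] at hne heq
        rw [hBjne e' he2] at heq
        rcases hcase with ⟨hD0, _⟩ | ⟨k₀, hDk, _, hnem, htgt, _, _⟩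
        · exact hne hD0
        · have hDe'ne : D p (B p e') ≠ 0 := by rw [← heq]; exact hne
          obtain ⟨t, ht⟩ := (hcan p e' (Or.inr ⟨rfl, he2i⟩)).resolve_left hDe'ne
          have htne := htgt e' he2i t ht
          have hBt : Bm' k₀ = B (p - 1) t := by rw [← hDk, heq, ht]
          rw [← hnem t htne] at hBt
          exact htne (Bm'.injective hBt).symm
      · exfalso
        have he1i : (e : ℕ) < i := by
          have : (e : ℕ) ≠ i := fun h => he1 (Fin.ext h)
          omega
        rw [hB'j] at hne heq
        rw [he2, hBjidx] at heq
        rw [hBjne e he1] at hne heq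
        rcases hcase with ⟨hD0, _⟩ | ⟨k₀, hDk, _, hnem, htgt, _, _⟩
        · rw [heq] at hne; exact hne hD0
        · have hDene : D p (B p e) ≠ 0 := hne
          obtain ⟨t, ht⟩ := (hcan p e (Or.inr ⟨rfl, he1i⟩)).resolve_left hDene
          have htne := htgt e he1i t ht
          have hBt : Bm' k₀ = B (p - 1) t := by rw [← hDk, ← heq, ht]
          rw [← hnem t htne] at hBt
          exact htne (Bm'.injective hBt).symm
      · have he1i : (e : ℕ) < i := by
          have : (e : ℕ) ≠ i := fun h => he1 (Fin.ext h)
          omega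
        have he2i : (e' : ℕ) < i := by
          have : (e' : ℕ) ≠ i := fun h => he2 (Fin.ext h)
          omega
        rw [hB'j] at hne heq
        rw [hBjne e he1] at hne heq
        rw [hBjne e' he2] at heq
        exact hinj p e e' (Or.inr ⟨rfl, he1i⟩) (Or.inr ⟨rfl, he2i⟩) hne heq
    · have hplt : p < j := by
        rcases hp with h | ⟨h, _⟩
        · exact h
        · exact absurd h hpj
      by_cases hp1 : p = j - 1
      · subst hp1
        rcases hcase with ⟨_, hall⟩ | ⟨k₀, hDk, hDm0, hnem, _, hDB0, _⟩
        · rw [hB'm] at hne heq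
          rw [hall e] at hne heq
          rw [hall e'] at heq
          exact hinj (j - 1) e e' (Or.inl (by omega)) (Or.inl (by omega)) hne heq
        · by_cases hek : e = k₀
          · exfalso
            rw [hB'm, hek] at hne
            exact hne hDm0
          · by_cases hek' : e' = k₀
            · exfalso
              rw [hB'm] at hne heq
              rw [hek'] at heq
              exact hne (heq.trans hDm0)
            · rw [hB'm] at hne heq
              rw [hnem e hek] at hne heq
              rw [hnem e' hek'] at heq
              exact hinj (j - 1) e e' (Or.inl (by omega)) (Or.inl (by omega)) hne heq
      · rw [hB'o p hpj hp1] at hne heq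
        exact hinj p e e' (Or.inl hplt) (Or.inl hplt) hne heq
  refine ⟨B', ?_, ?_, ?_, ?_, ?_, hpres, hcan', hinj'⟩
  · -- filtration compatibility
    intro i' p
    obtain ⟨r, hr⟩ := hBcompat i' p
    refine ⟨r, ?_⟩
    by_cases h1 : p = j
    · subst h1
      rw [hB'j, hspanj r]
      exact hr
    · by_cases h2 : p = j - 1
      · subst h2
        rw [hB'm, hspanm r]
        exact hr
      · rw [hB'o p h1 h2]
        exact hr
  · -- scaling statement
    refine ⟨c, hc, α, ?_⟩
    rw [hB'j, hBjidx, hydef]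
  · -- other degree-j vectors unchanged
    intro e he
    rw [hB'j, hBjne e (fun h => he (by rw [h]))]
  · -- other degrees unchanged
    intro p h1 h2 e
    rw [hB'o p h1 h2]
  · -- degree j-1 disjunction
    rcases hcase with ⟨_, hall⟩ | ⟨k₀, _, _, hnem, _, _, ⟨β, hβ⟩⟩
    · left
      intro e
      rw [hB'm, hall e]
    · right
      refine ⟨k₀, β, ?_, fun e he => by rw [hB'm, hnem e he]⟩
      rw [hB'm]
      exact hβ
end
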